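/- Let (A,B) be a bimatrix game with unique completely mixed Nash equilibrium E = (E_A, E_B) satisfying the minmax property Ā(q) ≥ Ā(E_B) and B̄(p) ≥ B̄(E_A) for all (p,q) ∈ Σ_A × Σ_B. Then asymptotically the average payoff along any fictitious play orbit is at least the Nash equilibrium payoff: liminf_{T→∞} (1/T)∫_0^T x(t)·A·y(t)dt ≥ π_A(E) and liminf_{T→∞} (1/T)∫_0^T x(t)·B·y(t)dt ≥ π_B(E). -/

import Mathlib

/-!
Let `G(t) = ∫₀ᵗ A y` be the cumulative payoff vector of player A, so that
`W(t) := maxᵢ Gᵢ(t) = t · Ā(q(t))`. Since `x(t)` is a best reply to `q(t)`, the function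
`s ↦ x(r) ⬝ G(s)` touches the Lipschitz function `W` from below at `s = r`; at almost every `r`
both are differentiable, so their derivatives agree: `W'(r) = x(r) ⬝ A y(r)` (envelope theorem).
Integrating, `∫₁ᵀ π_A(x, y) = W(T) - W(1)`, hence the time-average payoff differs from
`Ā(q(T))` by `O(1/T)`, and `Ā(q(T)) ≥ Ā(E_B) ≥ π_A(E)` by the minmax property.
Player B is player A of the transposed game.
-/

open Filter
open scoped BigOperators Topology

/-- Expected payoff `p A q`. -/
def pay {n : ℕ} (A : Matrix (Fin (n + 1)) (Fin (n + 1)) ℝ)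
    (p q : Fin (n + 1) → ℝ) : ℝ :=
  ∑ i, ∑ j, p i * A i j * q j

/-- `(p,q)` is a Nash equilibrium of the bimatrix game `(A,B)`. -/
def IsNash {n : ℕ} (A B : Matrix (Fin (n + 1)) (Fin (n + 1)) ℝ)
    (p q : Fin (n + 1) → ℝ) : Prop :=
  p ∈ stdSimplex ℝ (Fin (n + 1)) ∧ q ∈ stdSimplex ℝ (Fin (n + 1)) ∧
  (∀ p' ∈ stdSimplex ℝ (Fin (n + 1)), pay A p' q ≤ pay A p q) ∧
  (∀ q' ∈ stdSimplex ℝ (Fin (n + 1)), pay B p q' ≤ pay B p q)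

/-- Maximal entry of `A q`. -/
noncomputable def Abar {n : ℕ} (A : Matrix (Fin (n + 1)) (Fin (n + 1)) ℝ)
    (q : Fin (n + 1) → ℝ) : ℝ :=
  Finset.univ.sup' Finset.univ_nonempty (fun i => ∑ j, A i j * q j)

/-- Maximal entry of `p B`. -/
noncomputable def Bbar {n : ℕ} (B : Matrix (Fin (n + 1)) (Fin (n + 1)) ℝ)
    (p : Fin (n + 1) → ℝ) : ℝ :=
  Finset.univ.sup' Finset.univ_nonempty (fun j => ∑ i, p i * B i j)

open MeasureTheory Set Matrix
open scoped NNReal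

theorem HasDerivAt.eq_of_eventuallyLE_of_eq {φ ψ : ℝ → ℝ} {φ' ψ' r : ℝ}
    (hφ : HasDerivAt φ φ' r) (hψ : HasDerivAt ψ ψ' r) (hle : φ ≤ᶠ[𝓝 r] ψ) (heq : φ r = ψ r) :
    φ' = ψ' := by
  have hmin : IsLocalMin (ψ - φ) r := hle.mono fun s hs => by simp only [Pi.sub_apply]; linarith
  linarith [hmin.hasDerivAt_eq_zero (hψ.sub hφ)]

section SimplexMax

variable {ι : Type*} [Fintype ι] [Nonempty ι]

theorem dotProduct_le_sup' {w : ι → ℝ} (hw : w ∈ stdSimplex ℝ ι) (v : ι → ℝ) :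
    w ⬝ᵥ v ≤ Finset.univ.sup' Finset.univ_nonempty v :=
  calc w ⬝ᵥ v ≤ ∑ i, w i * Finset.univ.sup' Finset.univ_nonempty v :=
        Finset.sum_le_sum fun i _ =>
          mul_le_mul_of_nonneg_left (Finset.le_sup' v (Finset.mem_univ i)) (hw.1 i)
    _ = Finset.univ.sup' Finset.univ_nonempty v := by rw [← Finset.sum_mul, hw.2, one_mul]

theorem dotProduct_eq_sup'_of_forall_le {w v : ι → ℝ} (hw : w ∈ stdSimplex ℝ ι)
    (h : ∀ i, v i ≤ w ⬝ᵥ v) : w ⬝ᵥ v = Finset.univ.sup' Finset.univ_nonempty v :=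
  (dotProduct_le_sup' hw v).antisymm (Finset.sup'_le _ _ fun i _ => h i)

theorem sup'_le_norm (v : ι → ℝ) : Finset.univ.sup' Finset.univ_nonempty v ≤ ‖v‖ :=
  Finset.sup'_le _ _ fun i _ => (le_abs_self _).trans (norm_le_pi_norm v i)

theorem abs_dotProduct_le_norm {w : ι → ℝ} (hw : w ∈ stdSimplex ℝ ι) (v : ι → ℝ) :
    |w ⬝ᵥ v| ≤ ‖v‖ := by
  have hneg := (dotProduct_le_sup' hw (-v)).trans (sup'_le_norm (-v))
  rw [dotProduct_neg, norm_neg] at hneg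
  exact abs_le.2 ⟨by linarith, (dotProduct_le_sup' hw v).trans (sup'_le_norm v)⟩

theorem sup'_smul_of_nonneg {c : ℝ} (hc : 0 ≤ c) (v : ι → ℝ) :
    Finset.univ.sup' Finset.univ_nonempty (c • v) = c * Finset.univ.sup' Finset.univ_nonempty v :=
  (Finset.apply_sup'_eq_sup'_comp _ (c * ·) fun _ _ => mul_max_of_nonneg _ _ hc).symm

theorem lipschitzWith_sup' :
    LipschitzWith 1 fun v : ι → ℝ => Finset.univ.sup' Finset.univ_nonempty v :=
  LipschitzWith.of_le_add fun u v => Finset.sup'_le _ _ fun i _ => by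
    have hdist : u i - v i ≤ dist u v := (le_abs_self _).trans (dist_le_pi_dist u v i)
    linarith [Finset.le_sup' v (Finset.mem_univ i)]

theorem sup'_sub_sup'_eq_integral_dotProduct {G g x : ℝ → ι → ℝ} {K : ℝ≥0} {a b : ℝ}
    (hab : a ≤ b) (hG : LipschitzWith K G)
    (hg : ∀ᵐ r, HasDerivAt G (g r) r) (hx : ∀ r ∈ Icc a b, x r ∈ stdSimplex ℝ ι)
    (hmax : ∀ r ∈ Icc a b, x r ⬝ᵥ G r = Finset.univ.sup' Finset.univ_nonempty (G r)) :
    Finset.univ.sup' Finset.univ_nonempty (G b) - Finset.univ.sup' Finset.univ_nonempty (G a) =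
      ∫ r in a..b, x r ⬝ᵥ g r := by
  set W : ℝ → ℝ := fun t => Finset.univ.sup' Finset.univ_nonempty (G t)
  have hW : LipschitzWith (1 * K) W := lipschitzWith_sup'.comp hG
  rw [← hW.lipschitzOnWith.absolutelyContinuousOnInterval.integral_deriv_eq_sub]
  refine intervalIntegral.integral_congr_ae ?_
  filter_upwards [hW.ae_differentiableAt_real, hg] with r hWr hGr hr
  rw [uIoc_of_le hab] at hr
  have hr' := Ioc_subset_Icc_self hr
  have hdot : HasDerivAt (fun s => x r ⬝ᵥ G s) (x r ⬝ᵥ g r) r :=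
    HasDerivAt.fun_sum fun i _ => (hasDerivAt_pi.1 hGr i).const_mul (x r i)
  exact (hdot.eq_of_eventuallyLE_of_eq hWr.hasDerivAt
    (Eventually.of_forall fun s => dotProduct_le_sup' (hx r hr') (G s)) (hmax r hr')).symm

end SimplexMax

section Primitive

variable {E : Type*} [NormedAddCommGroup E]

theorem locallyIntegrable_of_norm_le_const {f : ℝ → E} {C : ℝ}
    (hf : AEStronglyMeasurable f volume) (hC : ∀ t, ‖f t‖ ≤ C) : LocallyIntegrable f volume :=
  (locallyIntegrable_const C).mono hf (ae_of_all _ fun t => (hC t).trans (le_abs_self C))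

theorem MeasureTheory.LocallyIntegrable.intervalIntegrable {f : ℝ → E}
    (hf : LocallyIntegrable f volume) (a b : ℝ) : IntervalIntegrable f volume a b :=
  (hf.integrableOn_isCompact isCompact_uIcc).intervalIntegrable

variable [NormedSpace ℝ E]

theorem lipschitzWith_primitive {f : ℝ → E} {C : ℝ≥0} (hf : LocallyIntegrable f volume)
    (hC : ∀ t, ‖f t‖ ≤ C) (a : ℝ) : LipschitzWith C fun t => ∫ s in a..t, f s :=
  LipschitzWith.of_dist_le_mul fun t u => by
    rw [dist_eq_norm, intervalIntegral.integral_interval_sub_left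
      (hf.intervalIntegrable _ _) (hf.intervalIntegrable _ _), Real.dist_eq]
    exact intervalIntegral.norm_integral_le_of_norm_le_const fun s _ => hC s

theorem Convex.interval_average_mem [CompleteSpace E] {s : Set E} (hs : Convex ℝ s)
    (hsc : IsClosed s) {f : ℝ → E} {a b : ℝ} (hab : a < b) (hf : IntervalIntegrable f volume a b)
    (hfs : ∀ t, f t ∈ s) : ⨍ t in a..b, f t ∈ s := by
  refine hs.set_average_mem hsc ?_ ?_ (ae_of_all _ fun t => hfs t) hf.def'
  · simp [uIoc_of_le hab.le, hab]
  · simp [uIoc_of_le hab.le]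

end Primitive

theorem le_liminf_of_tendsto_sub {α : Type*} {l : Filter α} [l.NeBot] {u v : α → ℝ} {c : ℝ}
    (huv : Tendsto (fun t => u t - v t) l (𝓝 0)) (hc : ∀ᶠ t in l, c ≤ v t)
    (hv : IsBoundedUnder (· ≤ ·) l v) : c ≤ liminf u l := by
  have hu : IsBoundedUnder (· ≤ ·) l u := by
    have := isBoundedUnder_le_add huv.isBoundedUnder_le hv
    rwa [show (fun t => u t - v t) + v = u from funext fun t => sub_add_cancel _ _] at this
  refine le_of_forall_pos_le_add fun ε hε => ?_
  have hclose : ∀ᶠ t in l, -ε < u t - v t := huv.eventually (Ioi_mem_nhds (neg_lt_zero.2 hε))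
  have := le_liminf_of_le (a := c - ε) hu.isCoboundedUnder_ge
    ((hclose.and hc).mono fun t ht => by linarith [ht.1, ht.2])
  linarith

theorem Matrix.mulVec_intervalIntegral {m k : Type*} [Fintype m] [Fintype k]
    (A : Matrix m k ℝ) {f : ℝ → k → ℝ} {a b : ℝ} (hf : IntervalIntegrable f volume a b) :
    A *ᵥ ∫ t in a..b, f t = ∫ t in a..b, A *ᵥ f t :=
  ((Matrix.mulVecLin A).toContinuousLinearMap.intervalIntegral_comp_comm hf).symm

theorem Matrix.exists_bound_mulVec_stdSimplex {m k : Type*} [Fintype m] [Fintype k]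
    (A : Matrix m k ℝ) : ∃ K : ℝ≥0, ∀ v ∈ stdSimplex ℝ k, ‖A *ᵥ v‖ ≤ K := by
  obtain ⟨K, hK⟩ := (isCompact_stdSimplex ℝ k).exists_bound_of_continuousOn
    (f := fun v => A *ᵥ v) (Continuous.matrix_mulVec continuous_const continuous_id).continuousOn
  exact ⟨K.toNNReal, fun v hv => (hK v hv).trans (Real.le_coe_toNNReal K)⟩

theorem locallyIntegrable_of_mem_stdSimplex {ι : Type*} [Fintype ι] {y : ℝ → ι → ℝ}
    (hymeas : Measurable y) (hy : ∀ t, y t ∈ stdSimplex ℝ ι) : LocallyIntegrable y volume :=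
  locallyIntegrable_of_norm_le_const hymeas.aestronglyMeasurable fun t =>
    mem_closedBall_zero_iff.1 (stdSimplex_subset_closedBall (hy t))

section Game

variable {n : ℕ}

theorem pay_eq_dotProduct_mulVec (A : Matrix (Fin (n + 1)) (Fin (n + 1)) ℝ)
    (p q : Fin (n + 1) → ℝ) : pay A p q = p ⬝ᵥ (A *ᵥ q) := by
  simp only [pay, dotProduct, mulVec, Finset.mul_sum, mul_assoc]

theorem Abar_eq_sup'_mulVec (A : Matrix (Fin (n + 1)) (Fin (n + 1)) ℝ) (q : Fin (n + 1) → ℝ) :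
    Abar A q = Finset.univ.sup' Finset.univ_nonempty (A *ᵥ q) :=
  rfl

theorem pay_le_Abar (A : Matrix (Fin (n + 1)) (Fin (n + 1)) ℝ) {p : Fin (n + 1) → ℝ}
    (hp : p ∈ stdSimplex ℝ (Fin (n + 1))) (q : Fin (n + 1) → ℝ) : pay A p q ≤ Abar A q := by
  rw [pay_eq_dotProduct_mulVec]
  exact dotProduct_le_sup' hp _

theorem pay_transpose (B : Matrix (Fin (n + 1)) (Fin (n + 1)) ℝ) (p q : Fin (n + 1) → ℝ) :
    pay Bᵀ q p = pay B p q := by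
  rw [pay, pay, Finset.sum_comm]
  simp only [transpose_apply]
  exact Finset.sum_congr rfl fun i _ => Finset.sum_congr rfl fun j _ => by ring

theorem Abar_transpose (B : Matrix (Fin (n + 1)) (Fin (n + 1)) ℝ) (p : Fin (n + 1) → ℝ) :
    Abar Bᵀ p = Bbar B p := by
  simp only [Abar, Bbar, transpose_apply, mul_comm]

theorem tendsto_average_pay_sub_Abar (A : Matrix (Fin (n + 1)) (Fin (n + 1)) ℝ)
    {x y q : ℝ → Fin (n + 1) → ℝ} (hxmeas : Measurable x) (hymeas : Measurable y)
    (hx : ∀ t, x t ∈ stdSimplex ℝ (Fin (n + 1))) (hy : ∀ t, y t ∈ stdSimplex ℝ (Fin (n + 1)))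
    (hq : ∀ t > (0:ℝ), q t = (1 / t) • ∫ s in (0:ℝ)..t, y s)
    (hBR : ∀ t ≥ (1:ℝ), ∀ p' ∈ stdSimplex ℝ (Fin (n + 1)),
      pay A p' (q t) ≤ pay A (x t) (q t)) :
    Tendsto (fun T => (1 / T) * (∫ t in (0:ℝ)..T, pay A (x t) (y t)) - Abar A (q T)) atTop
      (𝓝 0) := by
  obtain ⟨K, hK⟩ := A.exists_bound_mulVec_stdSimplex
  set G : ℝ → Fin (n + 1) → ℝ := fun t => ∫ s in (0:ℝ)..t, A *ᵥ y s
  have hAy : LocallyIntegrable (fun t => A *ᵥ y t) volume :=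
    locallyIntegrable_of_norm_le_const
      ((Continuous.matrix_mulVec continuous_const continuous_id).measurable.comp
        hymeas).aestronglyMeasurable fun t => hK _ (hy t)
  have hAq : ∀ t > (0:ℝ), A *ᵥ q t = t⁻¹ • G t := fun t ht => by
    rw [hq t ht, mulVec_smul, one_div, A.mulVec_intervalIntegral
      ((locallyIntegrable_of_mem_stdSimplex hymeas hy).intervalIntegrable 0 t)]
  have hmax : ∀ t ≥ (1:ℝ), x t ⬝ᵥ G t = Finset.univ.sup' Finset.univ_nonempty (G t) := by
    intro t ht
    refine dotProduct_eq_sup'_of_forall_le (hx t) fun i => ?_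
    have h := hBR t ht (Pi.single i 1) (single_mem_stdSimplex ℝ i)
    rw [pay_eq_dotProduct_mulVec, pay_eq_dotProduct_mulVec, single_dotProduct, one_mul,
      hAq t (by linarith), dotProduct_smul, Pi.smul_apply, smul_eq_mul, smul_eq_mul] at h
    exact le_of_mul_le_mul_left h (inv_pos.2 (by linarith))
  have hpay : ∀ T ≥ (1:ℝ), ∫ t in (1:ℝ)..T, pay A (x t) (y t) =
      Finset.univ.sup' Finset.univ_nonempty (G T) - Finset.univ.sup' Finset.univ_nonempty (G 1) :=
    fun T hT => by
      simp_rw [pay_eq_dotProduct_mulVec]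
      exact (sup'_sub_sup'_eq_integral_dotProduct hT
        (lipschitzWith_primitive hAy (fun t => hK _ (hy t)) 0)
        ((LocallyIntegrable.ae_hasDerivAt_integral hAy).mono fun r hr => hr 0) (fun r _ => hx r)
        (fun r hr => hmax r hr.1)).symm
  have hint : ∀ a b, IntervalIntegrable (fun t => pay A (x t) (y t)) volume a b := by
    refine (locallyIntegrable_of_norm_le_const (C := K) ?_ fun t => ?_).intervalIntegrable
    · unfold pay
      fun_prop
    · rw [pay_eq_dotProduct_mulVec, Real.norm_eq_abs]
      exact (abs_dotProduct_le_norm (hx t) _).trans (hK _ (hy t))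
  refine ((tendsto_const_nhds (x := (∫ t in (0:ℝ)..1, pay A (x t) (y t)) -
    Finset.univ.sup' Finset.univ_nonempty (G 1))).div_atTop tendsto_id).congr' ?_
  filter_upwards [eventually_ge_atTop 1] with T hT
  have hT0 : (0:ℝ) < T := by linarith
  rw [← intervalIntegral.integral_add_adjacent_intervals (hint 0 1) (hint 1 T), hpay T hT,
    Abar_eq_sup'_mulVec, hAq T hT0, sup'_smul_of_nonneg (inv_nonneg.2 hT0.le), id]
  field_simp
  ring

theorem le_liminf_average_pay (A : Matrix (Fin (n + 1)) (Fin (n + 1)) ℝ) {c : ℝ}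
    (hc : ∀ q' ∈ stdSimplex ℝ (Fin (n + 1)), c ≤ Abar A q')
    {x y q : ℝ → Fin (n + 1) → ℝ} (hxmeas : Measurable x) (hymeas : Measurable y)
    (hx : ∀ t, x t ∈ stdSimplex ℝ (Fin (n + 1))) (hy : ∀ t, y t ∈ stdSimplex ℝ (Fin (n + 1)))
    (hq : ∀ t > (0:ℝ), q t = (1 / t) • ∫ s in (0:ℝ)..t, y s)
    (hBR : ∀ t ≥ (1:ℝ), ∀ p' ∈ stdSimplex ℝ (Fin (n + 1)),
      pay A p' (q t) ≤ pay A (x t) (q t)) :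
    c ≤ atTop.liminf (fun T : ℝ => (1 / T) * ∫ t in (0:ℝ)..T, pay A (x t) (y t)) := by
  have hq_mem : ∀ T > (0:ℝ), q T ∈ stdSimplex ℝ (Fin (n + 1)) := fun T hT => by
    have hyT := (locallyIntegrable_of_mem_stdSimplex hymeas hy).intervalIntegrable 0 T
    simpa [hq T hT, interval_average_eq] using
      (convex_stdSimplex ℝ _).interval_average_mem (isClosed_stdSimplex ℝ _) hT hyT hy
  obtain ⟨K, hK⟩ := A.exists_bound_mulVec_stdSimplex
  refine le_liminf_of_tendsto_sub (tendsto_average_pay_sub_Abar A hxmeas hymeas hx hy hq hBR)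
    ((eventually_gt_atTop 0).mono fun T hT => hc _ (hq_mem T hT))
    ⟨K, eventually_map.2 <| (eventually_gt_atTop 0).mono fun T hT =>
      (sup'_le_norm _).trans (hK _ (hq_mem T hT))⟩

end Game

theorem fp_average_payoff_ge_nash_general {n : ℕ}
    (A B : Matrix (Fin (n + 1)) (Fin (n + 1)) ℝ)
    (EA EB : Fin (n + 1) → ℝ)
    (hNash : IsNash A B EA EB)
    (hMinA : ∀ q ∈ stdSimplex ℝ (Fin (n + 1)), Abar A EB ≤ Abar A q)
    (hMinB : ∀ p ∈ stdSimplex ℝ (Fin (n + 1)), Bbar B EA ≤ Bbar B p)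
    (x y : ℝ → Fin (n + 1) → ℝ)
    (hxmeas : Measurable x) (hymeas : Measurable y)
    (hx : ∀ t, x t ∈ stdSimplex ℝ (Fin (n + 1)))
    (hy : ∀ t, y t ∈ stdSimplex ℝ (Fin (n + 1)))
    (p q : ℝ → Fin (n + 1) → ℝ)
    (hp : ∀ t > (0:ℝ), p t = (1 / t) • ∫ s in (0:ℝ)..t, x s)
    (hq : ∀ t > (0:ℝ), q t = (1 / t) • ∫ s in (0:ℝ)..t, y s)
    (hBRA : ∀ t ≥ (1:ℝ), ∀ p' ∈ stdSimplex ℝ (Fin (n + 1)),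
      pay A p' (q t) ≤ pay A (x t) (q t))
    (hBRB : ∀ t ≥ (1:ℝ), ∀ q' ∈ stdSimplex ℝ (Fin (n + 1)),
      pay B (p t) q' ≤ pay B (p t) (y t)) :
    pay A EA EB ≤
      atTop.liminf (fun T : ℝ => (1 / T) * ∫ t in (0:ℝ)..T, pay A (x t) (y t)) ∧
    pay B EA EB ≤
      atTop.liminf (fun T : ℝ => (1 / T) * ∫ t in (0:ℝ)..T, pay B (x t) (y t)) := by
  obtain ⟨hEA, hEB, -, -⟩ := hNash
  refine ⟨le_liminf_average_pay A (fun q' hq' => (pay_le_Abar A hEA EB).trans (hMinA q' hq'))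
    hxmeas hymeas hx hy hq hBRA, ?_⟩
  have hcB : ∀ p' ∈ stdSimplex ℝ (Fin (n + 1)), pay B EA EB ≤ Abar Bᵀ p' := fun p' hp' => by
    rw [← pay_transpose, Abar_transpose]
    exact ((pay_le_Abar Bᵀ hEB EA).trans_eq (Abar_transpose B EA)).trans (hMinB p' hp')
  have hBRB' : ∀ t ≥ (1:ℝ), ∀ q' ∈ stdSimplex ℝ (Fin (n + 1)),
      pay Bᵀ q' (p t) ≤ pay Bᵀ (y t) (p t) := by
    simpa only [pay_transpose] using hBRB
  simpa only [pay_transpose] using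
    le_liminf_average_pay Bᵀ hcB hymeas hxmeas hy hx hp hBRB'

/-- if the unique completely mixed Nash equilibrium satisfies the minmax
property, then asymptotically the average payoff along any fictitious play orbit is at least
the Nash equilibrium payoff, for both players. -/
theorem fp_average_payoff_ge_nash {n : ℕ}
    (A B : Matrix (Fin (n + 1)) (Fin (n + 1)) ℝ)
    (EA EB : Fin (n + 1) → ℝ)
    (hNash : IsNash A B EA EB)
    (hMixed : (∀ i, 0 < EA i) ∧ (∀ j, 0 < EB j))
    (hUnique : ∀ p q, IsNash A B p q → p = EA ∧ q = EB)
    (hMinA : ∀ q ∈ stdSimplex ℝ (Fin (n + 1)), Abar A EB ≤ Abar A q)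
    (hMinB : ∀ p ∈ stdSimplex ℝ (Fin (n + 1)), Bbar B EA ≤ Bbar B p)
    (x y : ℝ → Fin (n + 1) → ℝ)
    (hxmeas : Measurable x) (hymeas : Measurable y)
    (hx : ∀ t, x t ∈ stdSimplex ℝ (Fin (n + 1)))
    (hy : ∀ t, y t ∈ stdSimplex ℝ (Fin (n + 1)))
    (p q : ℝ → Fin (n + 1) → ℝ)
    (hp : ∀ t > (0:ℝ), p t = (1 / t) • ∫ s in (0:ℝ)..t, x s)
    (hq : ∀ t > (0:ℝ), q t = (1 / t) • ∫ s in (0:ℝ)..t, y s)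
    (hBRA : ∀ t ≥ (1:ℝ), ∀ p' ∈ stdSimplex ℝ (Fin (n + 1)),
      pay A p' (q t) ≤ pay A (x t) (q t))
    (hBRB : ∀ t ≥ (1:ℝ), ∀ q' ∈ stdSimplex ℝ (Fin (n + 1)),
      pay B (p t) q' ≤ pay B (p t) (y t)) :
    pay A EA EB ≤
      atTop.liminf (fun T : ℝ => (1 / T) * ∫ t in (0:ℝ)..T, pay A (x t) (y t)) ∧
    pay B EA EB ≤
      atTop.liminf (fun T : ℝ => (1 / T) * ∫ t in (0:ℝ)..T, pay B (x t) (y t)) :=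
  fp_average_payoff_ge_nash_general A B EA EB hNash hMinA hMinB x y hxmeas hymeas hx hy p q hp hq
    hBRA hBRB
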